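/- For every s ∈ ℝ and every f ∈ L²(𝕋²), the X-ray transform is unitary from H^s(𝕋²) to H^s(𝕋² × Q) in the sense of the norm identity |f̂(0)|² + Σ_{k ∈ ℤ²\{0}} Σ_{v ∈ Q} ⟨k⟩^{2s} |\widehat{I_v f}(k)|² = Σ_{k ∈ ℤ²} ⟨k⟩^{2s} |f̂(k)|², where both sides may be infinite (and in particular \widehat{I_v f}(0) = f̂(0) for every v ∈ Q). -/

import Mathlib

noncomputable section
open MeasureTheory Real
open scoped ENNReal NNReal

instance : Fact ((0:ℝ) < 1) := ⟨one_pos⟩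

/-- The flat torus `𝕋ⁿ = ℝⁿ/ℤⁿ`, with the probability Haar (Lebesgue) measure. -/
abbrev Torus (n : ℕ) := Fin n → AddCircle (1:ℝ)

/-- The quotient map `π : ℝⁿ → 𝕋ⁿ`. -/
def tmap {n : ℕ} (x : Fin n → ℝ) : Torus n := fun i => (x i : AddCircle (1:ℝ))

/-- The character `x ↦ e^{2πi k·x}` on the torus. -/
def char {n : ℕ} (k : Fin n → ℤ) (x : Torus n) : ℂ := ∏ i, fourier (k i) (x i)

/-- The Fourier coefficient `f̂(k) = ∫ f(x) e^{−2πi k·x} dx`. -/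
def fCoeff {n : ℕ} (f : Torus n → ℂ) (k : Fin n → ℤ) : ℂ := ∫ x, char (-k) x * f x

/-- The X-ray transform on `𝕋²` in direction `v ∈ ℤ² \ {0}`:
`I_v f(x) = ∫₀¹ f(x + t v) dt`. -/
def xray (v : Fin 2 → ℤ) (f : Torus 2 → ℂ) (x : Torus 2) : ℂ :=
  ∫ t in (0:ℝ)..1, f (x + tmap fun i => t * (v i : ℝ))
/-- `⟨k⟩² = 1 + |k|²`. -/
def nrmSq (k : Fin 2 → ℤ) : ℝ := 1 + ((k 0 : ℝ)^2 + (k 1 : ℝ)^2)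

/-!
Translating `f` by `t • v` multiplies `f̂ k` by `e^{2πi t (k ⬝ᵥ v)}`, so averaging over `t ∈ [0, 1]`
gives `(I_v f)^(k) = f̂ k` when `k ⬝ᵥ v = 0` and `0` otherwise. For `k ≠ 0` exactly one `v ∈ Q`
is orthogonal to `k`, namely the representative of `k` rotated by a right angle, so the sum over
`Q` collapses to the single term `⟨k⟩^{2s} |f̂ k|²`; at `k = 0` the weight is `⟨0⟩^{2s} = 1`.
-/

instance : IsProbabilityMeasure ((volume : Measure ℝ).restrict (Set.Ioc (0:ℝ) 1)) :=
  ⟨by simp⟩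

section Character

variable {n : ℕ}

lemma norm_char (k : Fin n → ℤ) (x : Torus n) : ‖char k x‖ = 1 := by
  simp [char, norm_prod, Circle.norm_coe]

lemma char_add (k : Fin n → ℤ) (x y : Torus n) : char k (x + y) = char k x * char k y := by
  simp only [char, ← Finset.prod_mul_distrib, Pi.add_apply, fourier_apply, smul_add,
    AddCircle.toCircle_add, Circle.coe_mul]

lemma continuous_char (k : Fin n → ℤ) : Continuous (char k) :=
  continuous_finsetProd _ fun i _ => (fourier (k i)).continuous.comp (continuous_apply i)

lemma char_tmap (k : Fin n → ℤ) (y : Fin n → ℝ) :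
    char k (tmap y) = Complex.exp (2 * π * Complex.I * ∑ i, (k i : ℂ) * y i) := by
  simp only [char, tmap, fourier_coe_apply]
  rw [← Complex.exp_sum, Finset.mul_sum]
  congr 1
  refine Finset.sum_congr rfl fun i _ => ?_
  push_cast
  ring

lemma continuous_tmap : Continuous (tmap : (Fin n → ℝ) → Torus n) :=
  continuous_pi fun i => (AddCircle.continuous_mk' 1).comp (continuous_apply i)

lemma integral_char_mul_comp_add_right (k : Fin n → ℤ) (f : Torus n → ℂ) (c : Torus n) :
    ∫ x, char k x * f (x + c) = char k (-c) * ∫ x, char k x * f x := by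
  have hchar : ∀ x, char k x = char k (-c) * char k (x + c) := fun x => by
    rw [← char_add]
    congr 1
    abel
  calc ∫ x, char k x * f (x + c) = ∫ x, char k (-c) * (char k (x + c) * f (x + c)) := by
        congr 1 with x
        rw [hchar x, mul_assoc]
    _ = char k (-c) * ∫ x, char k x * f x := by
        rw [integral_const_mul, integral_add_right_eq_self (fun x => char k x * f x) c]

end Character

lemma integral_exp_two_pi_I_int_mul (m : ℤ) :
    ∫ t in (0:ℝ)..1, Complex.exp (2 * π * Complex.I * m * t) = if m = 0 then 1 else 0 := by
  split_ifs with hm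
  · simp [hm]
  · have hc : 2 * π * Complex.I * m ≠ 0 := by
      simp [hm, Real.pi_ne_zero, Complex.I_ne_zero]
    rw [integral_exp_mul_complex hc, Complex.ofReal_one, mul_one, Complex.ofReal_zero, mul_zero,
      show 2 * π * Complex.I * m = m * (2 * π * Complex.I) by ring,
      Complex.exp_int_mul_two_pi_mul_I, Complex.exp_zero, sub_self, zero_div]

lemma measurePreserving_add_comp {G T : Type*} [MeasurableSpace G] [MeasurableSpace T]
    [AddGroup G] [MeasurableAdd₂ G] (μ : Measure G) [SFinite μ] [μ.IsAddRightInvariant]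
    (ν : Measure T) [IsProbabilityMeasure ν] {c : T → G} (hc : Measurable c) :
    MeasurePreserving (fun p : G × T => p.1 + c p.2) (μ.prod ν) μ := by
  have hshear : MeasurePreserving (fun p : T × G => (p.1, p.2 + c p.1)) (ν.prod μ) (ν.prod μ) :=
    (MeasurePreserving.id ν).skew_product (measurable_snd.add (hc.comp measurable_fst))
      (Filter.Eventually.of_forall fun t => (measurePreserving_add_right μ (c t)).map_eq)
  have hsnd : MeasurePreserving (Prod.snd : T × G → G) (ν.prod μ) μ :=
    ⟨measurable_snd, by simp⟩
  exact hsnd.comp (hshear.comp Measure.measurePreserving_swap)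

theorem fCoeff_xray {f : Torus 2 → ℂ} (hf : Integrable f) (v k : Fin 2 → ℤ) :
    fCoeff (xray v f) k = if k ⬝ᵥ v = 0 then fCoeff f k else 0 := by
  set ν := (volume : Measure ℝ).restrict (Set.Ioc (0:ℝ) 1)
  set c : ℝ → Torus 2 := fun t => tmap fun i => t * (v i : ℝ)
  have hc : Continuous c :=
    continuous_tmap.comp (continuous_pi fun i => continuous_id.mul continuous_const)
  have hint : Integrable (Function.uncurry fun x t => char (-k) x * f (x + c t))
      ((volume : Measure (Torus 2)).prod ν) :=
    (((measurePreserving_add_comp volume ν hc.measurable).integrable_comp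
        hf.aestronglyMeasurable).mpr hf).bdd_mul
      ((continuous_char (-k)).comp continuous_fst).aestronglyMeasurable
      (Filter.Eventually.of_forall fun p => (norm_char _ _).le)
  have hphase : ∀ t : ℝ, char (-k) (-c t) = Complex.exp (2 * π * Complex.I * (k ⬝ᵥ v : ℤ) * t) :=
    fun t => by
      rw [show -c t = tmap fun i => -(t * v i) from rfl, char_tmap]
      congr 1
      simp only [dotProduct, Fin.sum_univ_two, Pi.neg_apply]
      push_cast
      ring
  calc fCoeff (xray v f) k
      = ∫ x, ∫ t, char (-k) x * f (x + c t) ∂ν := by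
        simp only [fCoeff, xray, intervalIntegral.integral_of_le zero_le_one, integral_const_mul]
        rfl
    _ = ∫ t, char (-k) (-c t) * fCoeff f k ∂ν := by
        rw [integral_integral_swap hint]
        simp only [integral_char_mul_comp_add_right]
        rfl
    _ = if k ⬝ᵥ v = 0 then fCoeff f k else 0 := by
        rw [integral_mul_const]
        simp only [hphase, ν, ← intervalIntegral.integral_of_le zero_le_one,
          integral_exp_two_pi_I_int_mul]
        split_ifs <;> simp

lemma smul_eq_smul_of_dotProduct_eq_zero {k v w : Fin 2 → ℤ} (hk : k ≠ 0)
    (hv : k ⬝ᵥ v = 0) (hw : k ⬝ᵥ w = 0) (i : Fin 2) : w i • v = v i • w := by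
  simp only [dotProduct, Fin.sum_univ_two] at hv hw
  have hcross : v 0 * w 1 = v 1 * w 0 := by
    have h0 : k 0 * (v 0 * w 1 - v 1 * w 0) = 0 := by linear_combination w 1 * hv - v 1 * hw
    have h1 : k 1 * (v 0 * w 1 - v 1 * w 0) = 0 := by linear_combination v 0 * hw - w 0 * hv
    obtain hk0 | hk1 : k 0 ≠ 0 ∨ k 1 ≠ 0 := by
      by_contra! h
      exact hk (funext fun j => by fin_cases j <;> simp [h.1, h.2])
    · linarith [(mul_eq_zero.mp h0).resolve_left hk0]
    · linarith [(mul_eq_zero.mp h1).resolve_left hk1]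
  ext j
  fin_cases i <;> fin_cases j <;>
    simp only [Fin.zero_eta, Fin.mk_one, Fin.isValue, Pi.smul_apply, Int.zsmul_eq_mul] <;> linarith

lemma eq_of_dotProduct_eq_zero {Q : Set (Fin 2 → ℤ)} (hQ0 : ∀ v ∈ Q, v ≠ 0)
    (hQ : ∀ v : Fin 2 → ℤ, v ≠ 0 → ∃! q, q ∈ Q ∧ ∃ m : ℤ, v = m • q)
    {k v w : Fin 2 → ℤ} (hk : k ≠ 0) (hv : v ∈ Q) (hw : w ∈ Q)
    (hkv : k ⬝ᵥ v = 0) (hkw : k ⬝ᵥ w = 0) : v = w := by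
  obtain ⟨i, hi⟩ : ∃ i, v i ≠ 0 := Function.ne_iff.mp (hQ0 v hv)
  exact (hQ _ (smul_ne_zero hi (hQ0 w hw))).unique
    ⟨hv, w i, (smul_eq_smul_of_dotProduct_eq_zero hk hkv hkw i).symm⟩ ⟨hw, v i, rfl⟩

lemma existsUnique_mem_dotProduct_eq_zero {Q : Set (Fin 2 → ℤ)} (hQ0 : ∀ v ∈ Q, v ≠ 0)
    (hQ : ∀ v : Fin 2 → ℤ, v ≠ 0 → ∃! q, q ∈ Q ∧ ∃ m : ℤ, v = m • q)
    {k : Fin 2 → ℤ} (hk : k ≠ 0) : ∃! q, q ∈ Q ∧ k ⬝ᵥ q = 0 := by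
  have hrot : ![-k 1, k 0] ≠ 0 := by
    contrapose! hk
    ext i
    fin_cases i
    · simpa using congrFun hk 1
    · simpa using congrFun hk 0
  obtain ⟨q, ⟨hqQ, m, hm⟩, -⟩ := hQ _ hrot
  have hkq : k ⬝ᵥ q = 0 := by
    have hm0 : m ≠ 0 := by rintro rfl; simp_all
    have : m * (k ⬝ᵥ q) = 0 := by
      rw [← smul_eq_mul, ← dotProduct_smul, ← hm]
      simp only [dotProduct, Fin.sum_univ_two, Matrix.cons_val_zero, Matrix.cons_val_one]
      ring
    exact (mul_eq_zero.mp this).resolve_left hm0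
  exact ⟨q, ⟨hqQ, hkq⟩, fun w ⟨hwQ, hkw⟩ => eq_of_dotProduct_eq_zero hQ0 hQ hk hwQ hqQ hkw hkq⟩

lemma tsum_eq_add_tsum_subtype_ne {α : Type*} (g : α → ℝ≥0∞) (a : α) :
    ∑' x, g x = g a + ∑' x : {x // x ≠ a}, g x := by
  rw [← ENNReal.summable.tsum_add_tsum_compl (s := {a}) ENNReal.summable, tsum_singleton]
  rfl

lemma nrmSq_zero : nrmSq 0 = 1 := by simp [nrmSq]

theorem xray_unitary_Hs
    (s : ℝ) (f : Torus 2 → ℂ) (hf : MemLp f 2 (volume : Measure (Torus 2)))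
    (Q : Set (Fin 2 → ℤ)) (hQ0 : ∀ v ∈ Q, v ≠ 0)
    (hQ : ∀ v : Fin 2 → ℤ, v ≠ 0 → ∃! q, q ∈ Q ∧ ∃ m : ℤ, v = m • q) :
    (∀ v ∈ Q, fCoeff (xray v f) 0 = fCoeff f 0) ∧
    (‖fCoeff f 0‖₊ : ℝ≥0∞) ^ 2 +
      ∑' (k : {k : Fin 2 → ℤ // k ≠ 0}) (v : Q),
        ENNReal.ofReal (nrmSq k.1 ^ s) * (‖fCoeff (xray v.1 f) k.1‖₊ : ℝ≥0∞) ^ 2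
      = ∑' (k : Fin 2 → ℤ),
        ENNReal.ofReal (nrmSq k ^ s) * (‖fCoeff f k‖₊ : ℝ≥0∞) ^ 2 := by
  have hcoeff := fCoeff_xray (hf.integrable one_le_two)
  refine ⟨fun v _ => by simp [hcoeff], ?_⟩
  have hdir : ∀ k : {k : Fin 2 → ℤ // k ≠ 0},
      ∑' v : Q, ENNReal.ofReal (nrmSq k.1 ^ s) * (‖fCoeff (xray v.1 f) k.1‖₊ : ℝ≥0∞) ^ 2
        = ENNReal.ofReal (nrmSq k.1 ^ s) * (‖fCoeff f k.1‖₊ : ℝ≥0∞) ^ 2 := by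
    rintro ⟨k, hk⟩
    obtain ⟨q, ⟨hqQ, hkq⟩, hq⟩ := existsUnique_mem_dotProduct_eq_zero hQ0 hQ hk
    rw [tsum_eq_single ⟨q, hqQ⟩ fun v hvq => ?_, hcoeff, if_pos hkq]
    rw [hcoeff, if_neg fun hkv => hvq (Subtype.ext (hq v ⟨v.2, hkv⟩))]
    simp
  rw [tsum_congr hdir, tsum_eq_add_tsum_subtype_ne _ (0 : Fin 2 → ℤ), nrmSq_zero, Real.one_rpow,
    ENNReal.ofReal_one, one_mul]
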